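/- Let φ : [0,∞) → [0,∞) be an N-function of class C¹([0,∞)) ∩ C²((0,∞)) with φ(0) = 0, φ'(0) = 0, φ' increasing and positive on (0,∞), satisfying p ≤ s·φ''(s)/φ'(s) + 1 ≤ q for all s > 0, where 1 < p ≤ q. Let U ⊂ ℝ^m be measurable with 0 < |U| < ∞ and let w : U → ℝ^{N×n} be measurable with ∫_U φ(|w|) dz < ∞. Then there exists c = c(n,p,q) > 0 such that for every Q₀ ∈ ℝ^{N×n}: ⨍_U φ_{1+|(w)_U|}(|w − (w)_U|) dz ≤ c · ⨍_U φ_{1+|Q₀|}(|w − Q₀|) dz, where (w)_U := ⨍_U w dz and φ_σ denotes the shifted N-function of φ with shift σ. -/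

import Mathlib

open MeasureTheory Real Set Filter
open scoped InnerProductSpace

/-- An N-function `φ` of class `C¹([0,∞)) ∩ C²((0,∞))` with (right) derivative `φ'`
and second derivative `φ''` on `(0,∞)`, satisfying `φ(0) = 0`, `φ'(0) = 0`, `φ'`
increasing and positive on `(0,∞)`, and the index condition
`p ≤ s·φ''(s)/φ'(s) + 1 ≤ q` for all `s > 0`. -/
structure IsNFun (φ φ' φ'' : ℝ → ℝ) (p q : ℝ) : Prop where
  map_zero : φ 0 = 0
  nonneg : ∀ s : ℝ, 0 ≤ s → 0 ≤ φ s
  hasDeriv : ∀ s ∈ Set.Ici (0:ℝ), HasDerivWithinAt φ (φ' s) (Set.Ici 0) s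
  derivCont : ContinuousOn φ' (Set.Ici 0)
  hasDeriv2 : ∀ s ∈ Set.Ioi (0:ℝ), HasDerivWithinAt φ' (φ'' s) (Set.Ioi 0) s
  deriv2Cont : ContinuousOn φ'' (Set.Ioi 0)
  deriv_zero : φ' 0 = 0
  deriv_mono : MonotoneOn φ' (Set.Ici 0)
  deriv_pos : ∀ s : ℝ, 0 < s → 0 < φ' s
  idx_low : ∀ s : ℝ, 0 < s → p ≤ s * φ'' s / φ' s + 1
  idx_high : ∀ s : ℝ, 0 < s → s * φ'' s / φ' s + 1 ≤ q

/-- The shifted N-function `φ_σ(s) = ∫₀^s φ'(σ+t)·t/(σ+t) dt`, expressed through the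
derivative `φ'` of `φ`. -/
noncomputable def shifted (φ' : ℝ → ℝ) (σ s : ℝ) : ℝ :=
  ∫ t in (0:ℝ)..s, φ' (σ + t) * t / (σ + t)

/-!
The shifted N-function `φ_σ` is the primitive of the increasing function
`φ_σ'(t) = φ'(σ+t)·t/(σ+t)`, and the upper index `q` makes `φ'`, hence `φ_σ'`, doubling. For
such primitives `φ_σ(s) ≤ s·φ_σ'(s) ≤ 2^{q+1}·φ_σ(s)`, so `φ_σ` is doubling too, and since a
change of the shift by at most `s` changes `φ_σ'(s)` only by the factor `2^q`, we get the
pointwise bound `φ_a(|w - (w)_U|) ≲ φ_b(|w - Q₀|) + φ_b(|(w)_U - Q₀|)` for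
`a = 1 + |(w)_U|`, `b = 1 + |Q₀|`. Jensen's inequality for the convex increasing `φ_b` bounds
the last term by `⨍_U φ_b(|w - Q₀|)`; integrability of everything in sight comes from
`φ_b(t) ≤ φ(b + t)` and the `Δ₂` condition of `φ`.
-/

section MonotoneIntegrand

variable {g : ℝ → ℝ}

theorem intervalIntegral_le_mul_of_monotoneOn {a b : ℝ} (hab : a ≤ b)
    (hg : MonotoneOn g (Icc a b)) : ∫ t in a..b, g t ≤ (b - a) * g b := by
  have hint : IntervalIntegrable g volume a b := (uIcc_of_le hab ▸ hg).intervalIntegrable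
  simpa using intervalIntegral.integral_mono_on hab hint intervalIntegrable_const
    fun t ht => hg ht (right_mem_Icc.2 hab) ht.2

theorem mul_le_intervalIntegral_of_monotoneOn {a b : ℝ} (hab : a ≤ b)
    (hg : MonotoneOn g (Icc a b)) : (b - a) * g a ≤ ∫ t in a..b, g t := by
  have hint : IntervalIntegrable g volume a b := (uIcc_of_le hab ▸ hg).intervalIntegrable
  simpa using intervalIntegral.integral_mono_on hab intervalIntegrable_const hint
    fun t ht => hg (left_mem_Icc.2 hab) ht ht.1

theorem MonotoneOn.nonneg_of_Ici (hg : MonotoneOn g (Ici 0)) (hg₀ : 0 ≤ g 0) {x : ℝ}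
    (hx : 0 ≤ x) : 0 ≤ g x :=
  hg₀.trans (hg self_mem_Ici hx hx)

theorem MonotoneOn.intervalIntegrable_of_Ici (hg : MonotoneOn g (Ici 0)) {a b : ℝ}
    (ha : 0 ≤ a) (hb : 0 ≤ b) : IntervalIntegrable g volume a b :=
  (hg.mono fun _ hx => (le_min ha hb).trans hx.1).intervalIntegrable

theorem monotoneOn_intervalIntegral_zero (hg : MonotoneOn g (Ici 0)) (hg₀ : 0 ≤ g 0) :
    MonotoneOn (fun s => ∫ t in (0:ℝ)..s, g t) (Ici 0) := by
  intro s (hs : 0 ≤ s) t (ht : 0 ≤ t) hst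
  dsimp only
  rw [← intervalIntegral.integral_add_adjacent_intervals (hg.intervalIntegrable_of_Ici le_rfl hs)
    (hg.intervalIntegrable_of_Ici hs ht)]
  exact le_add_of_nonneg_right
    (intervalIntegral.integral_nonneg hst fun x hx => hg.nonneg_of_Ici hg₀ (hs.trans hx.1))

theorem intervalIntegral_zero_le_mul (hg : MonotoneOn g (Ici 0)) {s : ℝ} (hs : 0 ≤ s) :
    ∫ t in (0:ℝ)..s, g t ≤ s * g s := by
  simpa using intervalIntegral_le_mul_of_monotoneOn hs (hg.mono Icc_subset_Ici_self)

theorem mul_le_intervalIntegral_zero (hg : MonotoneOn g (Ici 0)) (hg₀ : 0 ≤ g 0) {K : ℝ}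
    (hK₀ : 0 ≤ K) (hK : ∀ s, 0 ≤ s → g (2 * s) ≤ K * g s) {s : ℝ} (hs : 0 ≤ s) :
    s * g s ≤ 2 * K * ∫ t in (0:ℝ)..s, g t := by
  have hs2 : 0 ≤ s / 2 := by positivity
  have hdouble : g s ≤ K * g (s / 2) := by simpa [mul_div_cancel₀] using hK _ hs2
  have htail : (s - s / 2) * g (s / 2) ≤ ∫ t in (s / 2)..s, g t :=
    mul_le_intervalIntegral_of_monotoneOn (by linarith) (hg.mono fun x hx => hs2.trans hx.1)
  have hhead : 0 ≤ ∫ t in (0:ℝ)..(s / 2), g t :=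
    intervalIntegral.integral_nonneg hs2 fun x hx => hg.nonneg_of_Ici hg₀ hx.1
  have hsplit := intervalIntegral.integral_add_adjacent_intervals
    (hg.intervalIntegrable_of_Ici le_rfl hs2) (hg.intervalIntegrable_of_Ici hs2 hs)
  calc s * g s ≤ s * (K * g (s / 2)) := mul_le_mul_of_nonneg_left hdouble hs
    _ = 2 * K * ((s - s / 2) * g (s / 2)) := by ring
    _ ≤ 2 * K * ∫ t in (s / 2)..s, g t := mul_le_mul_of_nonneg_left htail (by positivity)
    _ ≤ 2 * K * ∫ t in (0:ℝ)..s, g t :=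
      mul_le_mul_of_nonneg_left (by linarith) (by positivity)

theorem intervalIntegral_zero_two_mul_le (hg : MonotoneOn g (Ici 0)) (hg₀ : 0 ≤ g 0) {K : ℝ}
    (hK₀ : 0 ≤ K) (hK : ∀ s, 0 ≤ s → g (2 * s) ≤ K * g s) {s : ℝ} (hs : 0 ≤ s) :
    ∫ t in (0:ℝ)..(2 * s), g t ≤ 4 * K ^ 2 * ∫ t in (0:ℝ)..s, g t :=
  calc ∫ t in (0:ℝ)..(2 * s), g t ≤ 2 * s * g (2 * s) :=
        intervalIntegral_zero_le_mul hg (by positivity)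
    _ ≤ 2 * s * (K * g s) := mul_le_mul_of_nonneg_left (hK s hs) (by positivity)
    _ = 2 * K * (s * g s) := by ring
    _ ≤ 2 * K * (2 * K * ∫ t in (0:ℝ)..s, g t) :=
      mul_le_mul_of_nonneg_left (mul_le_intervalIntegral_zero hg hg₀ hK₀ hK hs) (by positivity)
    _ = 4 * K ^ 2 * ∫ t in (0:ℝ)..s, g t := by ring

theorem hasDerivAt_intervalIntegral_zero {a : ℝ} (hgc : ContinuousOn g (Ioi a)) (ha : a < 0)
    {s : ℝ} (hs : a < s) : HasDerivAt (fun x => ∫ t in (0:ℝ)..x, g t) (g s) s :=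
  intervalIntegral.integral_hasDerivAt_right
    (hgc.mono fun _ hx => (lt_min ha hs).trans_le hx.1).intervalIntegrable
    (hgc.stronglyMeasurableAtFilter isOpen_Ioi s hs) (hgc.continuousAt (Ioi_mem_nhds hs))

theorem continuousOn_intervalIntegral_zero {a : ℝ} (hgc : ContinuousOn g (Ioi a)) (ha : a < 0) :
    ContinuousOn (fun x => ∫ t in (0:ℝ)..x, g t) (Ici 0) := fun s (hs : 0 ≤ s) =>
  (hasDerivAt_intervalIntegral_zero hgc ha (ha.trans_le hs)).continuousAt.continuousWithinAt

theorem convexOn_intervalIntegral_zero {a : ℝ} (hgc : ContinuousOn g (Ioi a)) (ha : a < 0)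
    (hg : MonotoneOn g (Ici 0)) : ConvexOn ℝ (Ici 0) (fun x => ∫ t in (0:ℝ)..x, g t) := by
  have hderiv := fun s (hs : 0 < s) => hasDerivAt_intervalIntegral_zero hgc ha (ha.trans hs)
  refine MonotoneOn.convexOn_of_deriv (convex_Ici 0) (continuousOn_intervalIntegral_zero hgc ha)
    ?_ ?_ <;> rw [interior_Ici]
  · exact fun s hs => (hderiv s hs).differentiableAt.differentiableWithinAt
  · intro s (hs : 0 < s) t (ht : 0 < t) hst
    rw [(hderiv s hs).deriv, (hderiv t ht).deriv]
    exact hg hs.le ht.le hst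

end MonotoneIntegrand

theorem ConvexOn.map_norm_integral_le {α E : Type*} [MeasurableSpace α] [NormedAddCommGroup E]
    [NormedSpace ℝ E] [CompleteSpace E] {μ : Measure α} [IsProbabilityMeasure μ] {F : ℝ → ℝ}
    (hF : ConvexOn ℝ (Ici 0) F) (hFm : MonotoneOn F (Ici 0)) (hFc : ContinuousOn F (Ici 0))
    {f : α → E} (hf : Integrable f μ) (hFf : Integrable (fun x => F ‖f x‖) μ) :
    F ‖∫ x, f x ∂μ‖ ≤ ∫ x, F ‖f x‖ ∂μ :=
  (hFm (norm_nonneg _) (mem_Ici.2 (integral_nonneg fun _ => norm_nonneg _))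
    (norm_integral_le_integral_norm f)).trans
    (hF.map_integral_le hFc isClosed_Ici (ae_of_all _ fun _ => norm_nonneg _) hf.norm hFf)

-- `shifted φ' σ s` is by definition `∫ t in 0..s, shiftedDeriv φ' σ t`.
noncomputable def shiftedDeriv (φ' : ℝ → ℝ) (σ t : ℝ) : ℝ := φ' (σ + t) * t / (σ + t)

theorem shiftedDeriv_zero (φ' : ℝ → ℝ) (σ : ℝ) : shiftedDeriv φ' σ 0 = 0 := by
  simp [shiftedDeriv]

namespace IsNFun

variable {φ φ' φ'' : ℝ → ℝ} {p q : ℝ}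

theorem deriv_nonneg (h : IsNFun φ φ' φ'' p q) {s : ℝ} (hs : 0 ≤ s) : 0 ≤ φ' s :=
  h.deriv_mono.nonneg_of_Ici h.deriv_zero.ge hs

theorem antitoneOn_deriv_mul_rpow (h : IsNFun φ φ' φ'' p q) :
    AntitoneOn (fun x => φ' x * x ^ (1 - q)) (Ioi 0) := by
  have hderiv : ∀ x ∈ Ioi (0:ℝ), HasDerivAt (fun x => φ' x * x ^ (1 - q))
      ((x * φ'' x - (q - 1) * φ' x) * x ^ (-q)) x := by
    intro x (hx : 0 < x)
    have hpow : x ^ (1 - q) = x * x ^ (-q) := by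
      rw [sub_eq_add_neg, Real.rpow_add hx, Real.rpow_one]
    refine (((h.hasDeriv2 x hx).hasDerivAt (Ioi_mem_nhds hx)).mul
      (Real.hasDerivAt_rpow_const (p := 1 - q) (Or.inl hx.ne'))).congr_deriv ?_
    rw [hpow, show 1 - q - 1 = -q by ring]
    ring
  refine antitoneOn_of_deriv_nonpos (convex_Ioi 0)
    (fun x hx => (hderiv x hx).continuousAt.continuousWithinAt) ?_ ?_ <;> rw [interior_Ioi]
  · exact fun x hx => (hderiv x hx).differentiableAt.differentiableWithinAt
  · intro x (hx : 0 < x)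
    have hidx : x * φ'' x ≤ (q - 1) * φ' x := by
      have hle := (div_le_iff₀ (h.deriv_pos x hx)).1
        (by linarith [h.idx_high x hx] : x * φ'' x / φ' x ≤ q - 1)
      linarith
    rw [(hderiv x hx).deriv]
    exact mul_nonpos_of_nonpos_of_nonneg (by linarith) (Real.rpow_nonneg hx.le _)

theorem deriv_le_two_rpow_mul (h : IsNFun φ φ' φ'' p q) (hq : 1 ≤ q) {s t : ℝ}
    (hs : 0 < s) (hst : s ≤ t) (ht : t ≤ 2 * s) : φ' t ≤ 2 ^ (q - 1) * φ' s := by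
  have ht0 : 0 < t := hs.trans_le hst
  have hanti := h.antitoneOn_deriv_mul_rpow hs ht0 hst
  have hinv : ∀ x : ℝ, 0 < x → x ^ (1 - q) = (x ^ (q - 1))⁻¹ := fun x hx => by
    rw [← Real.rpow_neg hx.le, neg_sub]
  simp only [hinv s hs, hinv t ht0, ← div_eq_mul_inv] at hanti
  rw [div_le_div_iff₀ (Real.rpow_pos_of_pos ht0 _) (Real.rpow_pos_of_pos hs _)] at hanti
  have hpow : t ^ (q - 1) ≤ 2 ^ (q - 1) * s ^ (q - 1) := by
    rw [← Real.mul_rpow zero_le_two hs.le]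
    exact Real.rpow_le_rpow ht0.le ht (by linarith)
  have hspos := Real.rpow_pos_of_pos hs (q - 1)
  nlinarith [h.deriv_nonneg hs.le]

theorem sub_eq_intervalIntegral (h : IsNFun φ φ' φ'' p q) {u v : ℝ} (hu : 0 ≤ u) (huv : u ≤ v) :
    φ v - φ u = ∫ t in u..v, φ' t := by
  have hsub : Icc u v ⊆ Ici 0 := fun _ hx => hu.trans hx.1
  refine (intervalIntegral.integral_eq_sub_of_hasDeriv_right_of_le huv
    (fun x hx => ((h.hasDeriv x (hsub hx)).continuousWithinAt).mono hsub)
    (fun x hx => (h.hasDeriv x (hsub (Ioo_subset_Icc_self hx))).mono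
      fun y (hy : x < y) => hu.trans (hx.1.trans hy).le)
    (h.deriv_mono.intervalIntegrable_of_Ici hu (hu.trans huv))).symm

theorem eq_intervalIntegral (h : IsNFun φ φ' φ'' p q) {s : ℝ} (hs : 0 ≤ s) :
    φ s = ∫ t in (0:ℝ)..s, φ' t := by
  simpa [h.map_zero] using h.sub_eq_intervalIntegral le_rfl hs

theorem monotoneOn (h : IsNFun φ φ' φ'' p q) : MonotoneOn φ (Ici 0) := fun s hs t ht hst => by
  simpa only [h.eq_intervalIntegral hs, h.eq_intervalIntegral ht] using
    monotoneOn_intervalIntegral_zero h.deriv_mono h.deriv_zero.ge hs ht hst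

theorem apply_two_mul_le (h : IsNFun φ φ' φ'' p q) (hq : 1 ≤ q) {s : ℝ} (hs : 0 ≤ s) :
    φ (2 * s) ≤ 4 * (2 ^ (q - 1)) ^ 2 * φ s := by
  have hdouble : ∀ s : ℝ, 0 ≤ s → φ' (2 * s) ≤ 2 ^ (q - 1) * φ' s := fun s hs => by
    rcases hs.eq_or_lt with rfl | hs
    · simp [h.deriv_zero]
    · exact h.deriv_le_two_rpow_mul hq hs (by linarith) le_rfl
  rw [h.eq_intervalIntegral hs, h.eq_intervalIntegral (by positivity)]
  exact intervalIntegral_zero_two_mul_le h.deriv_mono h.deriv_zero.ge (by positivity) hdouble hs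

theorem apply_add_le (h : IsNFun φ φ' φ'' p q) (hq : 1 ≤ q) {u v : ℝ} (hu : 0 ≤ u)
    (hv : 0 ≤ v) : φ (u + v) ≤ 4 * (2 ^ (q - 1)) ^ 2 * (φ u + φ v) := by
  have hmax : 0 ≤ max u v := hu.trans (le_max_left u v)
  have hsum : u + v ≤ 2 * max u v := by linarith [le_max_left u v, le_max_right u v]
  have hφmax : φ (max u v) ≤ φ u + φ v := by
    rcases max_choice u v with hc | hc <;> rw [hc] <;> linarith [h.nonneg u hu, h.nonneg v hv]
  calc φ (u + v) ≤ φ (2 * max u v) :=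
        h.monotoneOn (mem_Ici.2 (add_nonneg hu hv)) (mem_Ici.2 (by positivity)) hsum
    _ ≤ 4 * (2 ^ (q - 1)) ^ 2 * φ (max u v) := h.apply_two_mul_le hq hmax
    _ ≤ 4 * (2 ^ (q - 1)) ^ 2 * (φ u + φ v) := mul_le_mul_of_nonneg_left hφmax (by positivity)

theorem sub_one_mul_deriv_one_le (h : IsNFun φ φ' φ'' p q) {s : ℝ} (hs : 0 ≤ s) :
    (s - 1) * φ' 1 ≤ φ s := by
  rcases le_total s 1 with hs1 | hs1
  · exact (mul_nonpos_of_nonpos_of_nonneg (by linarith) (h.deriv_nonneg zero_le_one)).trans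
      (h.nonneg s hs)
  · have := mul_le_intervalIntegral_of_monotoneOn hs1
      (h.deriv_mono.mono fun _ hx => zero_le_one.trans hx.1)
    rw [← h.sub_eq_intervalIntegral zero_le_one hs1] at this
    linarith [h.nonneg 1 zero_le_one]

theorem continuousOn_shiftedDeriv (h : IsNFun φ φ' φ'' p q) (σ : ℝ) :
    ContinuousOn (shiftedDeriv φ' σ) (Ioi (-σ)) := by
  have hpos : ∀ t ∈ Ioi (-σ), 0 < σ + t := fun t (ht : -σ < t) => by linarith
  exact ((h.derivCont.comp (continuousOn_const.add continuousOn_id)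
    fun t ht => (hpos t ht).le).mul continuousOn_id).div
    (continuousOn_const.add continuousOn_id) fun t ht => (hpos t ht).ne'

theorem monotoneOn_shiftedDeriv (h : IsNFun φ φ' φ'' p q) {σ : ℝ} (hσ : 0 < σ) :
    MonotoneOn (shiftedDeriv φ' σ) (Ici 0) := by
  have hφ : MonotoneOn (fun t => φ' (σ + t)) (Ici 0) := fun s (hs : 0 ≤ s) t (ht : 0 ≤ t) hst =>
    h.deriv_mono (mem_Ici.2 (by linarith)) (mem_Ici.2 (by linarith)) (by linarith)
  have hfrac : MonotoneOn (fun t => t / (σ + t)) (Ici 0) := fun s (hs : 0 ≤ s) t _ hst => by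
    rw [div_le_div_iff₀ (by linarith) (by linarith)]
    nlinarith
  intro s hs t ht hst
  simpa only [shiftedDeriv, mul_div_assoc, Pi.mul_apply] using
    hφ.mul hfrac (fun t (ht : 0 ≤ t) => h.deriv_nonneg (by linarith))
      (fun t (ht : 0 ≤ t) => div_nonneg ht (by linarith)) hs ht hst

theorem shiftedDeriv_le (h : IsNFun φ φ' φ'' p q) {σ t : ℝ} (hσ : 0 < σ) (ht : 0 ≤ t) :
    shiftedDeriv φ' σ t ≤ φ' (σ + t) := by
  rw [shiftedDeriv, mul_div_assoc]
  exact mul_le_of_le_one_right (h.deriv_nonneg (by linarith))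
    ((div_le_one (by linarith)).2 (by linarith))

theorem shiftedDeriv_two_mul_le (h : IsNFun φ φ' φ'' p q) (hq : 1 ≤ q) {σ s : ℝ} (hσ : 0 < σ)
    (hs : 0 ≤ s) : shiftedDeriv φ' σ (2 * s) ≤ 2 ^ q * shiftedDeriv φ' σ s := by
  have hφ : φ' (σ + 2 * s) ≤ 2 ^ (q - 1) * φ' (σ + s) :=
    h.deriv_le_two_rpow_mul hq (by linarith) (by linarith) (by linarith)
  have hfrac : 2 * s / (σ + 2 * s) ≤ 2 * (s / (σ + s)) := by
    rw [← mul_div_assoc, div_le_div_iff₀ (by linarith) (by linarith)]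
    nlinarith
  calc shiftedDeriv φ' σ (2 * s) = φ' (σ + 2 * s) * (2 * s / (σ + 2 * s)) := mul_div_assoc ..
    _ ≤ 2 ^ (q - 1) * φ' (σ + s) * (2 * (s / (σ + s))) :=
      mul_le_mul hφ hfrac (div_nonneg (by linarith) (by linarith))
        (mul_nonneg (by positivity) (h.deriv_nonneg (by linarith)))
    _ = 2 ^ q * shiftedDeriv φ' σ s := by
      rw [shiftedDeriv, Real.rpow_sub_one two_ne_zero]
      ring

theorem shiftedDeriv_le_of_abs_sub_le (h : IsNFun φ φ' φ'' p q) (hq : 1 ≤ q) {a b s : ℝ}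
    (ha : 0 < a) (hb : 0 < b) (hab : |a - b| ≤ s) :
    shiftedDeriv φ' a s ≤ 2 ^ q * shiftedDeriv φ' b s := by
  obtain ⟨hba, hab⟩ := abs_le.1 hab
  have hs : 0 ≤ s := by linarith
  have hφ : φ' (a + s) ≤ 2 ^ (q - 1) * φ' (b + s) :=
    (h.deriv_mono (mem_Ici.2 (by linarith)) (mem_Ici.2 (by linarith))
      (by linarith : a + s ≤ b + 2 * s)).trans
      (h.deriv_le_two_rpow_mul hq (by linarith) (by linarith) (by linarith))
  have hfrac : s / (a + s) ≤ 2 * (s / (b + s)) := by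
    rw [← mul_div_assoc, div_le_div_iff₀ (by linarith) (by linarith)]
    nlinarith
  calc shiftedDeriv φ' a s = φ' (a + s) * (s / (a + s)) := mul_div_assoc ..
    _ ≤ 2 ^ (q - 1) * φ' (b + s) * (2 * (s / (b + s))) :=
      mul_le_mul hφ hfrac (div_nonneg hs (by linarith))
        (mul_nonneg (by positivity) (h.deriv_nonneg (by linarith)))
    _ = 2 ^ q * shiftedDeriv φ' b s := by
      rw [shiftedDeriv, Real.rpow_sub_one two_ne_zero]
      ring

theorem shifted_nonneg (h : IsNFun φ φ' φ'' p q) {σ s : ℝ} (hσ : 0 < σ) (hs : 0 ≤ s) :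
    0 ≤ shifted φ' σ s :=
  intervalIntegral.integral_nonneg hs fun _ ht =>
    (h.monotoneOn_shiftedDeriv hσ).nonneg_of_Ici (shiftedDeriv_zero φ' σ).ge ht.1

theorem monotoneOn_shifted (h : IsNFun φ φ' φ'' p q) {σ : ℝ} (hσ : 0 < σ) :
    MonotoneOn (shifted φ' σ) (Ici 0) :=
  monotoneOn_intervalIntegral_zero (h.monotoneOn_shiftedDeriv hσ) (shiftedDeriv_zero φ' σ).ge

theorem continuousOn_shifted (h : IsNFun φ φ' φ'' p q) {σ : ℝ} (hσ : 0 < σ) :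
    ContinuousOn (shifted φ' σ) (Ici 0) :=
  continuousOn_intervalIntegral_zero (h.continuousOn_shiftedDeriv σ) (neg_neg_of_pos hσ)

theorem convexOn_shifted (h : IsNFun φ φ' φ'' p q) {σ : ℝ} (hσ : 0 < σ) :
    ConvexOn ℝ (Ici 0) (shifted φ' σ) :=
  convexOn_intervalIntegral_zero (h.continuousOn_shiftedDeriv σ) (neg_neg_of_pos hσ)
    (h.monotoneOn_shiftedDeriv hσ)

theorem shifted_two_mul_le (h : IsNFun φ φ' φ'' p q) (hq : 1 ≤ q) {σ s : ℝ} (hσ : 0 < σ)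
    (hs : 0 ≤ s) : shifted φ' σ (2 * s) ≤ 4 * (2 ^ q) ^ 2 * shifted φ' σ s :=
  intervalIntegral_zero_two_mul_le (h.monotoneOn_shiftedDeriv hσ) (shiftedDeriv_zero φ' σ).ge
    (by positivity) (fun _ ht => h.shiftedDeriv_two_mul_le hq hσ ht) hs

theorem shifted_le_of_abs_sub_le (h : IsNFun φ φ' φ'' p q) (hq : 1 ≤ q) {a b s : ℝ}
    (ha : 0 < a) (hb : 0 < b) (hab : |a - b| ≤ s) :
    shifted φ' a s ≤ 2 * (2 ^ q) ^ 2 * shifted φ' b s := by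
  have hs : 0 ≤ s := (abs_nonneg _).trans hab
  calc shifted φ' a s ≤ s * shiftedDeriv φ' a s :=
        intervalIntegral_zero_le_mul (h.monotoneOn_shiftedDeriv ha) hs
    _ ≤ s * (2 ^ q * shiftedDeriv φ' b s) :=
        mul_le_mul_of_nonneg_left (h.shiftedDeriv_le_of_abs_sub_le hq ha hb hab) hs
    _ = 2 ^ q * (s * shiftedDeriv φ' b s) := by ring
    _ ≤ 2 ^ q * (2 * 2 ^ q * shifted φ' b s) :=
        mul_le_mul_of_nonneg_left (mul_le_intervalIntegral_zero (h.monotoneOn_shiftedDeriv hb)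
          (shiftedDeriv_zero φ' b).ge (by positivity)
          (fun _ ht => h.shiftedDeriv_two_mul_le hq hb ht) hs) (by positivity)
    _ = 2 * (2 ^ q) ^ 2 * shifted φ' b s := by ring

theorem shifted_le_add_of_abs_sub_le (h : IsNFun φ φ' φ'' p q) (hq : 1 ≤ q) {a b d x r : ℝ}
    (ha : 0 < a) (hb : 0 < b) (hab : |a - b| ≤ d) (hx : 0 ≤ x) (hr : 0 ≤ r) (hrx : r ≤ x + d) :
    shifted φ' a r ≤ 8 * (2 ^ q) ^ 4 * (shifted φ' b x + shifted φ' b d) := by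
  set M := max x d with hMdef
  have hd : 0 ≤ d := (abs_nonneg _).trans hab
  have hM : 0 ≤ M := hx.trans (le_max_left x d)
  have hbM : shifted φ' b M ≤ shifted φ' b x + shifted φ' b d := by
    rcases max_choice x d with hc | hc <;> rw [hMdef, hc] <;>
      linarith [h.shifted_nonneg hb hx, h.shifted_nonneg hb hd]
  calc shifted φ' a r ≤ shifted φ' a (2 * M) :=
        h.monotoneOn_shifted ha hr (mem_Ici.2 (by positivity))
          (by linarith [le_max_left x d, le_max_right x d])
    _ ≤ 4 * (2 ^ q) ^ 2 * shifted φ' a M := h.shifted_two_mul_le hq ha hM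
    _ ≤ 4 * (2 ^ q) ^ 2 * (2 * (2 ^ q) ^ 2 * shifted φ' b M) :=
        mul_le_mul_of_nonneg_left
          (h.shifted_le_of_abs_sub_le hq ha hb (hab.trans (le_max_right x d))) (by positivity)
    _ ≤ 4 * (2 ^ q) ^ 2 * (2 * (2 ^ q) ^ 2 * (shifted φ' b x + shifted φ' b d)) := by
        gcongr
    _ = 8 * (2 ^ q) ^ 4 * (shifted φ' b x + shifted φ' b d) := by ring

theorem shifted_le_apply_add (h : IsNFun φ φ' φ'' p q) {σ t : ℝ} (hσ : 0 < σ) (ht : 0 ≤ t) :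
    shifted φ' σ t ≤ φ (σ + t) := by
  have hint : IntervalIntegrable (fun x => φ' (σ + x)) volume 0 t := by
    simpa using
      (h.deriv_mono.intervalIntegrable_of_Ici hσ.le (by linarith : 0 ≤ σ + t)).comp_add_left σ
  have hφ : ∫ x in (0:ℝ)..t, φ' (σ + x) = φ (σ + t) - φ σ := by
    rw [intervalIntegral.integral_comp_add_left, add_zero,
      h.sub_eq_intervalIntegral hσ.le (by linarith)]
  calc shifted φ' σ t ≤ ∫ x in (0:ℝ)..t, φ' (σ + x) :=
        intervalIntegral.integral_mono_on ht
          ((h.monotoneOn_shiftedDeriv hσ).intervalIntegrable_of_Ici le_rfl ht) hint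
          fun x hx => h.shiftedDeriv_le hσ hx.1
    _ ≤ φ (σ + t) := by linarith [h.nonneg σ hσ.le]

section Integrability

variable {α E : Type*} [MeasurableSpace α] [NormedAddCommGroup E]
  {μ : Measure α} {w : α → E}

theorem integrable_of_integrable_comp_norm (h : IsNFun φ φ' φ'' p q) [IsFiniteMeasure μ]
    (hw : AEStronglyMeasurable w μ) (hφw : Integrable (fun z => φ ‖w z‖) μ) : Integrable w μ := by
  refine ((integrable_const 1).add (hφw.const_mul (φ' 1)⁻¹)).mono' hw (ae_of_all _ fun z => ?_)
  rw [Pi.add_apply, ← sub_le_iff_le_add', ← div_eq_inv_mul, le_div_iff₀ (h.deriv_pos 1 one_pos)]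
  exact h.sub_one_mul_deriv_one_le (norm_nonneg (w z))

theorem integrable_shifted_norm_sub (h : IsNFun φ φ' φ'' p q) (hq : 1 ≤ q) [IsFiniteMeasure μ]
    {σ : ℝ} (hσ : 0 < σ) (hw : AEStronglyMeasurable w μ)
    (hφw : Integrable (fun z => φ ‖w z‖) μ) (Q : E) :
    Integrable (fun z => shifted φ' σ ‖w z - Q‖) μ := by
  have hmeas : AEStronglyMeasurable (fun z => shifted φ' σ ‖w z - Q‖) μ :=
    ((h.continuousOn_shifted hσ).comp_continuous (continuous_id.sub continuous_const).norm
      fun v => norm_nonneg (v - Q)).comp_aestronglyMeasurable hw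
  refine (((integrable_const (φ (σ + ‖Q‖))).add hφw).const_mul (4 * (2 ^ (q - 1)) ^ 2)).mono'
    hmeas (ae_of_all _ fun z => ?_)
  rw [Real.norm_of_nonneg (h.shifted_nonneg hσ (norm_nonneg _))]
  calc shifted φ' σ ‖w z - Q‖ ≤ φ (σ + ‖w z - Q‖) := h.shifted_le_apply_add hσ (norm_nonneg _)
    _ ≤ φ (σ + ‖Q‖ + ‖w z‖) :=
        h.monotoneOn (mem_Ici.2 (by positivity)) (mem_Ici.2 (by positivity))
          (by linarith [norm_sub_le (w z) Q])
    _ ≤ 4 * (2 ^ (q - 1)) ^ 2 * (φ (σ + ‖Q‖) + φ ‖w z‖) :=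
        h.apply_add_le hq (by positivity) (norm_nonneg _)

theorem integral_shifted_norm_sub_integral_le [NormedSpace ℝ E] [CompleteSpace E]
    [IsProbabilityMeasure μ] (h : IsNFun φ φ' φ'' p q) (hq : 1 ≤ q)
    (hw : AEStronglyMeasurable w μ) (hφw : Integrable (fun z => φ ‖w z‖) μ) (Q : E) :
    ∫ z, shifted φ' (1 + ‖∫ y, w y ∂μ‖) ‖w z - ∫ y, w y ∂μ‖ ∂μ
      ≤ 16 * (2 ^ q) ^ 4 * ∫ z, shifted φ' (1 + ‖Q‖) ‖w z - Q‖ ∂μ := by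
  set W := ∫ y, w y ∂μ
  set C : ℝ := 8 * (2 ^ q) ^ 4
  set A := ∫ z, shifted φ' (1 + ‖Q‖) ‖w z - Q‖ ∂μ
  have ha : 0 < 1 + ‖W‖ := by positivity
  have hb : 0 < 1 + ‖Q‖ := by positivity
  have hwint := h.integrable_of_integrable_comp_norm hw hφw
  have hgint := h.integrable_shifted_norm_sub hq hb hw hφw Q
  have hjensen : shifted φ' (1 + ‖Q‖) ‖W - Q‖ ≤ A := by
    have := (h.convexOn_shifted hb).map_norm_integral_le (h.monotoneOn_shifted hb)
      (h.continuousOn_shifted hb) (f := fun z => w z - Q) (hwint.sub (integrable_const Q)) hgint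
    rwa [integral_sub hwint (integrable_const Q), integral_const, probReal_univ, one_smul] at this
  have hpoint : ∀ z, shifted φ' (1 + ‖W‖) ‖w z - W‖
      ≤ C * (shifted φ' (1 + ‖Q‖) ‖w z - Q‖ + shifted φ' (1 + ‖Q‖) ‖W - Q‖) := fun z =>
    h.shifted_le_add_of_abs_sub_le hq ha hb
      (by rw [add_sub_add_left_eq_sub]; exact abs_norm_sub_norm_le W Q) (norm_nonneg _)
      (norm_nonneg _)
      ((norm_sub_le_norm_sub_add_norm_sub _ Q _).trans_eq (by rw [norm_sub_rev Q W]))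
  calc ∫ z, shifted φ' (1 + ‖W‖) ‖w z - W‖ ∂μ
      ≤ ∫ z, C * (shifted φ' (1 + ‖Q‖) ‖w z - Q‖ + shifted φ' (1 + ‖Q‖) ‖W - Q‖) ∂μ :=
        integral_mono_of_nonneg (ae_of_all _ fun z => h.shifted_nonneg ha (norm_nonneg _))
          ((hgint.add (integrable_const _)).const_mul C) (ae_of_all _ hpoint)
    _ = C * (A + shifted φ' (1 + ‖Q‖) ‖W - Q‖) := by
        rw [integral_const_mul, integral_add hgint (integrable_const _), integral_const,
          probReal_univ, one_smul]
    _ ≤ C * (A + A) := by gcongr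
    _ = 16 * (2 ^ q) ^ 4 * A := by ring

end Integrability

end IsNFun

/-- **Almost minimality of the mean for shifted N-functions.** For an N-function `φ`
with index condition (`1 < p ≤ q`) and `w` measurable with `∫_U φ(|w|) dz < ∞`,
`⨍_U φ_{1+|(w)_U|}(|w − (w)_U|) ≤ c ⨍_U φ_{1+|Q₀|}(|w − Q₀|)` for every `Q₀`. -/
theorem shifted_mean_almost_minimality (m N n : ℕ) (p q : ℝ) (φ φ' φ'' : ℝ → ℝ)
    (hp : 1 < p) (hpq : p ≤ q) (h : IsNFun φ φ' φ'' p q) :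
    ∃ c : ℝ, 0 < c ∧ ∀ U : Set (EuclideanSpace ℝ (Fin m)), MeasurableSet U →
      0 < volume U → volume U < ⊤ →
      ∀ w : EuclideanSpace ℝ (Fin m) → EuclideanSpace ℝ (Fin N × Fin n),
        AEStronglyMeasurable w (volume.restrict U) →
        IntegrableOn (fun z => φ ‖w z‖) U →
        ∀ Q₀ : EuclideanSpace ℝ (Fin N × Fin n),
          (⨍ z in U, shifted φ' (1 + ‖⨍ y in U, w y‖) ‖w z - ⨍ y in U, w y‖)
            ≤ c * ⨍ z in U, shifted φ' (1 + ‖Q₀‖) ‖w z - Q₀‖ := by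
  refine ⟨16 * (2 ^ q) ^ 4, by positivity, fun U _ hU0 hUtop w hw hφw Q₀ => ?_⟩
  have : IsFiniteMeasure (volume.restrict U) := ⟨by simpa using hUtop⟩
  have : NeZero (volume.restrict U) := ⟨by simpa using hU0.ne'⟩
  simp only [average_eq']
  exact h.integral_shifted_norm_sub_integral_le (hp.le.trans hpq) (hw.smul_measure _)
    hφw.to_average Q₀
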